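/- There exists a maximal eventually different family 𝒜 ⊆ ω^ω which is not s-measurable, not m-measurable and not l-measurable, and which contains a dominating subfamily 𝒟 ⊆ 𝒜 of cardinality at most 𝔡. -/

import Mathlib

open Cardinal Set

/-- A tree on ω: a nonempty set of finite sequences closed under initial segments. -/
def IsTree (T : Set (List ℕ)) : Prop :=
  T.Nonempty ∧ ∀ s ∈ T, ∀ n : ℕ, s.take n ∈ T

/-- The body of a tree: all infinite branches. -/
def treeBody (T : Set (List ℕ)) : Set (ℕ → ℕ) :=
  {x | ∀ n : ℕ, (List.ofFn fun i : Fin n => x i) ∈ T}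

/-- Immediate successors of a node in a tree. -/
def succs (T : Set (List ℕ)) (t : List ℕ) : Set ℕ := {n | t ++ [n] ∈ T}

/-- Sacks (perfect) tree: every node has an extension with at least two immediate successors. -/
def IsSacksTree (T : Set (List ℕ)) : Prop :=
  IsTree T ∧ ∀ s ∈ T, ∃ t ∈ T, s <+: t ∧ (succs T t).Nontrivial

/-- Miller tree: every node has an extension with infinitely many immediate successors. -/
def IsMillerTree (T : Set (List ℕ)) : Prop :=
  IsTree T ∧ ∀ s ∈ T, ∃ t ∈ T, s <+: t ∧ (succs T t).Infinite

/-- Laver tree: has a stem (a node comparable with every node) such that every node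
extending the stem has infinitely many immediate successors. -/
def IsLaverTree (T : Set (List ℕ)) : Prop :=
  IsTree T ∧ ∃ s ∈ T, (∀ t ∈ T, s <+: t ∨ t <+: s) ∧
    ∀ t ∈ T, s <+: t → (succs T t).Infinite

/-- Complete Laver tree: every node has infinitely many immediate successors. -/
def IsCompleteLaverTree (T : Set (List ℕ)) : Prop :=
  IsTree T ∧ ∀ t ∈ T, (succs T t).Infinite

/-- The tree ideal t₀ associated with a family of trees 𝕋. -/
def treeIdeal (𝕋 : Set (Set (List ℕ))) : Set (Set (ℕ → ℕ)) :=
  {A | ∀ P ∈ 𝕋, ∃ Q ∈ 𝕋, Q ⊆ P ∧ treeBody Q ∩ A = ∅}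

/-- t-measurability with respect to a family of trees 𝕋. -/
def TMeasurable (𝕋 : Set (Set (List ℕ))) (A : Set (ℕ → ℕ)) : Prop :=
  ∀ P ∈ 𝕋, ∃ Q ∈ 𝕋, Q ⊆ P ∧ (treeBody Q ⊆ A ∨ treeBody Q ∩ A = ∅)

/-- 𝕋-Bernstein set: meets and omits the body of every tree in 𝕋. -/
def TBernstein (𝕋 : Set (Set (List ℕ))) (B : Set (ℕ → ℕ)) : Prop :=
  ∀ T ∈ 𝕋, (B ∩ treeBody T).Nonempty ∧ (B \ treeBody T).Nonempty

/-- Eventually different family. -/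
def EDFamily (A : Set (ℕ → ℕ)) : Prop :=
  ∀ f ∈ A, ∀ g ∈ A, f ≠ g → {n : ℕ | f n = g n}.Finite

/-- Maximal eventually different family. -/
def MEDFamily (A : Set (ℕ → ℕ)) : Prop :=
  EDFamily A ∧ ∀ B : Set (ℕ → ℕ), A ⊂ B → ¬ EDFamily B

/-- Dominating family. -/
def IsDominating (D : Set (ℕ → ℕ)) : Prop :=
  ∀ x : ℕ → ℕ, ∃ d ∈ D, ∀ᶠ n in Filter.atTop, x n < d n

/-- The dominating number 𝔡. -/
noncomputable def domNumber : Cardinal :=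
  sInf {c : Cardinal | ∃ D : Set (ℕ → ℕ), IsDominating D ∧ Cardinal.mk ↑D = c}

/-!
Every entry of a node of `codingTree` codes the entries before it, so its branches are pairwise
eventually different; it is a complete Laver tree, hence a Sacks, Miller and Laver tree, and each
of its Sacks subtrees has `𝔠` branches. A recursion of length `𝔠` picks for every Sacks subtree `Q`
branches `c Q` and `y Q`, with no `c Q` equal to any `y Q'`. Put the `c Q` into the family, together
with `killer (y Q)`, which agrees with `y Q` infinitely often, and with a copy `raise '' D` of a
dominating family of size `𝔡`; residues modulo `4` keep these parts apart. A maximal extension `A`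
then contains every `c Q` and no `y Q`, so no Sacks subtree of `codingTree` has its body inside `A`
or disjoint from it, and Miller and Laver trees are Sacks trees.
-/

open Function Encodable

universe u

section Transversal

theorem exists_injective_forall_mem_of_mk_le {ι X : Type u} (B : ι → Set X)
    (h : ∀ i, #ι ≤ #(B i)) : ∃ F : ι → X, Injective F ∧ ∀ i, F i ∈ B i := by
  classical
  obtain ⟨r, wo, hord⟩ := Cardinal.exists_ord_eq ι
  -- Recursion along a well-order of type `#ι`: fewer than `#ι` points have been used so far.
  have hseg : ∀ i, #{j // r j i} < #ι := fun i => by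
    rw [← Ordinal.card_typein]
    exact Cardinal.lt_ord.mp (hord ▸ Ordinal.typein_lt_type r i)
  have hfresh : ∀ i (G : ∀ j, r j i → X),
      (B i \ range fun j : {j // r j i} => G j.1 j.2).Nonempty := fun i G => by
    rw [sdiff_nonempty]
    intro hsub
    exact (h i).not_gt <| (mk_le_mk_of_subset hsub |>.trans mk_range_le).trans_lt (hseg i)
  let F : ι → X := wo.wf.fix fun i G => (hfresh i G).choose
  have hF : ∀ i, F i ∈ B i ∧ ∀ j, r j i → F j ≠ F i := fun i => by
    have := (hfresh i fun j _ => F j).choose_spec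
    rw [← show F i = _ from wo.wf.fix_eq _ i] at this
    exact ⟨this.1, fun j hj hji => this.2 ⟨⟨j, hj⟩, hji⟩⟩
  refine ⟨F, fun i j hij => ?_, fun i => (hF i).1⟩
  rcases trichotomous_of r i j with hr | rfl | hr
  · exact absurd hij ((hF j).2 i hr)
  · rfl
  · exact absurd hij.symm ((hF i).2 j hr)

end Transversal

section InitialSegments

def initSeg (x : ℕ → ℕ) (n : ℕ) : List ℕ := List.ofFn fun i : Fin n => x i

variable {x y f g : ℕ → ℕ} {m n : ℕ}

@[simp] theorem length_initSeg : (initSeg x n).length = n := List.length_ofFn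

@[simp] theorem getElem_initSeg {i : ℕ} (h : i < (initSeg x n).length) : (initSeg x n)[i] = x i :=
  List.getElem_ofFn h

theorem initSeg_eq_initSeg_iff : initSeg x n = initSeg y n ↔ ∀ i < n, x i = y i := by
  simp only [initSeg, List.ofFn_inj, funext_iff, Fin.forall_iff]

theorem take_initSeg (h : m ≤ n) : (initSeg x n).take m = initSeg x m := by
  apply List.ext_getElem <;> simp [h]

theorem mem_treeBody_iff {T : Set (List ℕ)} : x ∈ treeBody T ↔ ∀ n, initSeg x n ∈ T := Iff.rfl

theorem treeBody_mono {T T' : Set (List ℕ)} (h : T ⊆ T') : treeBody T ⊆ treeBody T' :=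
  fun _ hx n => h (hx n)

theorem finite_setOf_eq_of_initSeg (hxy : x ≠ y)
    (h : ∀ n, f n = g n → initSeg x n = initSeg y n) : {n | f n = g n}.Finite := by
  obtain ⟨m, hm⟩ := ne_iff.mp hxy
  refine (finite_Iic m).subset fun n hn => ?_
  by_contra hmn
  exact hm (initSeg_eq_initSeg_iff.mp (h n hn) m (not_le.mp hmn))

end InitialSegments

section Trees

variable {T : Set (List ℕ)}

theorem IsTree.nil_mem (hT : IsTree T) : [] ∈ T := by
  obtain ⟨s, hs⟩ := hT.1
  simpa using hT.2 s hs 0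

theorem IsMillerTree.isSacksTree (hT : IsMillerTree T) : IsSacksTree T :=
  ⟨hT.1, fun s hs => (hT.2 s hs).imp fun _ ⟨ht, hst, hinf⟩ => ⟨ht, hst, hinf.nontrivial⟩⟩

theorem IsLaverTree.isSacksTree (hT : IsLaverTree T) : IsSacksTree T := by
  obtain ⟨htree, s, hs, hcomp, hsucc⟩ := hT
  refine ⟨htree, fun t ht => ?_⟩
  rcases hcomp t ht with hst | hts
  · exact ⟨t, ht, List.prefix_refl t, (hsucc t ht hst).nontrivial⟩
  · exact ⟨s, hs, hts, (hsucc s hs (List.prefix_refl s)).nontrivial⟩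

theorem IsCompleteLaverTree.isLaverTree (hT : IsCompleteLaverTree T) : IsLaverTree T :=
  ⟨hT.1, [], hT.1.nil_mem, fun _ _ => Or.inl List.nil_prefix, fun t ht _ => hT.2 t ht⟩

theorem IsCompleteLaverTree.isMillerTree (hT : IsCompleteLaverTree T) : IsMillerTree T :=
  ⟨hT.1, fun s hs => ⟨s, hs, List.prefix_refl s, hT.2 s hs⟩⟩

theorem IsCompleteLaverTree.isSacksTree (hT : IsCompleteLaverTree T) : IsSacksTree T :=
  hT.isMillerTree.isSacksTree

theorem not_tMeasurable_of_forall_subtree {𝕋 : Set (Set (List ℕ))} {A : Set (ℕ → ℕ)}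
    {P : Set (List ℕ)} (hP : P ∈ 𝕋)
    (h : ∀ Q ∈ 𝕋, Q ⊆ P → (treeBody Q ∩ A).Nonempty ∧ ¬ treeBody Q ⊆ A) :
    ¬ TMeasurable 𝕋 A := fun hA => by
  obtain ⟨Q, hQ, hQP, hsub | hdisj⟩ := hA P hP
  · exact (h Q hQ hQP).2 hsub
  · exact (h Q hQ hQP).1.ne_empty hdisj

end Trees

section PrefixChains

def chainLimit (s : ℕ → List ℕ) (i : ℕ) : ℕ := (s (i + 1)).getD i 0

variable {s : ℕ → List ℕ}

theorem prefix_of_le_of_prefix_succ (hs : ∀ n, s n <+: s (n + 1)) {m n : ℕ} (h : m ≤ n) :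
    s m <+: s n := by
  induction n, h using Nat.le_induction with
  | base => exact List.prefix_refl _
  | succ n _ ih => exact ih.trans (hs n)

theorem chainLimit_eq_getElem (hs : ∀ n, s n <+: s (n + 1)) (hlen : ∀ n, n ≤ (s n).length)
    {m i : ℕ} (hi : i < (s m).length) : chainLimit s i = (s m)[i] := by
  have hi' : i < (s (i + 1)).length := hlen (i + 1)
  rw [chainLimit, List.getD_eq_getElem _ _ hi']
  rcases le_total (i + 1) m with h | h
  · exact (prefix_of_le_of_prefix_succ hs h).getElem hi'
  · exact ((prefix_of_le_of_prefix_succ hs h).getElem hi).symm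

theorem initSeg_chainLimit (hs : ∀ n, s n <+: s (n + 1)) (hlen : ∀ n, n ≤ (s n).length) (n : ℕ) :
    initSeg (chainLimit s) n = (s n).take n := by
  apply List.ext_getElem
  · simpa using hlen n
  · intro i hi _
    simp only [getElem_initSeg, List.getElem_take]
    exact chainLimit_eq_getElem hs hlen _

end PrefixChains

section SacksTrees

def splitPath (u : List ℕ → List ℕ) (v : List ℕ → Bool → ℕ) (x : ℕ → Bool) : ℕ → List ℕ
  | 0 => []
  | n + 1 => u (splitPath u v x n) ++ [v (splitPath u v x n) (x n)]

variable {u : List ℕ → List ℕ} {v : List ℕ → Bool → ℕ}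

theorem splitPath_prefix_succ (hu : ∀ t, t <+: u t) (x : ℕ → Bool) (n : ℕ) :
    splitPath u v x n <+: splitPath u v x (n + 1) :=
  (hu _).trans (List.prefix_append _ _)

theorem le_length_splitPath (hu : ∀ t, t <+: u t) (x : ℕ → Bool) (n : ℕ) :
    n ≤ (splitPath u v x n).length := by
  induction n with
  | zero => exact le_rfl
  | succ n ih =>
    have := (hu (splitPath u v x n)).length_le
    simp only [splitPath, List.length_append, List.length_singleton]
    omega

theorem chainLimit_splitPath_length (hu : ∀ t, t <+: u t) (x : ℕ → Bool) (n : ℕ) :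
    chainLimit (splitPath u v x) (u (splitPath u v x n)).length =
      v (splitPath u v x n) (x n) := by
  rw [chainLimit_eq_getElem (splitPath_prefix_succ hu x) (le_length_splitPath hu x) (m := n + 1)
    (by simp [splitPath])]
  simp [splitPath]

theorem chainLimit_splitPath_injective (hu : ∀ t, t <+: u t) (hv : ∀ t, Injective (v t)) :
    Injective fun x => chainLimit (splitPath u v x) := by
  intro x y hxy
  have hbit : ∀ n, splitPath u v x n = splitPath u v y n → x n = y n := fun n hn => by
    have : chainLimit (splitPath u v x) _ = chainLimit (splitPath u v y) _ :=
      congrFun hxy (u (splitPath u v x n)).length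
    rw [chainLimit_splitPath_length hu, hn, chainLimit_splitPath_length hu] at this
    exact hv _ this
  have hpath : ∀ n, splitPath u v x n = splitPath u v y n := fun n => by
    induction n with
    | zero => rfl
    | succ n ih => simp only [splitPath, ih, hbit n ih]
  exact funext fun n => hbit n (hpath n)

variable {Q : Set (List ℕ)}

theorem IsSacksTree.exists_splitting (hQ : IsSacksTree Q) (t : List ℕ) :
    ∃ u, t <+: u ∧ ∃ v : Bool → ℕ, Injective v ∧ (t ∈ Q → ∀ b, u ++ [v b] ∈ Q) := by
  by_cases ht : t ∈ Q
  · obtain ⟨u, -, htu, a, ha, b, hb, hab⟩ := hQ.2 t ht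
    refine ⟨u, htu, fun c => cond c a b, fun c d hcd => ?_, fun _ c => by cases c <;> assumption⟩
    cases c <;> cases d <;> simp_all [eq_comm]
  · refine ⟨t, List.prefix_refl t, Bool.toNat, fun c d => ?_, fun h => absurd h ht⟩
    cases c <;> cases d <;> simp

theorem IsSacksTree.continuum_le_mk_treeBody (hQ : IsSacksTree Q) : 𝔠 ≤ #(treeBody Q) := by
  choose u hu v hv hQuv using hQ.exists_splitting
  have hmem : ∀ x n, splitPath u v x n ∈ Q := fun x n => by
    induction n with
    | zero => exact hQ.1.nil_mem
    | succ n ih => exact hQuv _ ih _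
  have hbody : ∀ x, chainLimit (splitPath u v x) ∈ treeBody Q := fun x n => by
    rw [← initSeg, initSeg_chainLimit (splitPath_prefix_succ hu x) (le_length_splitPath hu x)]
    exact hQ.1.2 _ (hmem x n) n
  calc 𝔠 = #(ℕ → Bool) := by simp
    _ ≤ #(treeBody Q) := mk_le_of_injective (f := fun x => ⟨_, hbody x⟩)
        fun x y hxy => chainLimit_splitPath_injective hu hv (congrArg Subtype.val hxy)

end SacksTrees

section CodingTree

/-- A single value of a branch determines the branch up to that point; the factor `4` leaves the
residues `1, 2, 3` free for `killer` and `raise`. -/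
def codingTree : Set (List ℕ) :=
  {l | ∀ i (hi : i < l.length), ∃ k, l[i] = 4 * Nat.pair (encode (l.take i)) k}

theorem append_singleton_mem_codingTree {t : List ℕ} (ht : t ∈ codingTree) (k : ℕ) :
    t ++ [4 * Nat.pair (encode t) k] ∈ codingTree := by
  intro i hi
  simp only [List.length_append, List.length_singleton] at hi
  rcases (Nat.lt_succ_iff_lt_or_eq.mp hi) with hi | rfl
  · rw [List.getElem_append_left hi, List.take_append_of_le_length hi.le]
    exact ht i hi
  · exact ⟨k, by simp⟩

theorem isCompleteLaverTree_codingTree : IsCompleteLaverTree codingTree := by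
  refine ⟨⟨⟨[], fun i hi => absurd hi (Nat.not_lt_zero i)⟩, fun l hl n i hi => ?_⟩, fun t ht => ?_⟩
  · have hin : i < n := lt_of_lt_of_le hi (by simp)
    rw [List.getElem_take, List.take_take, min_eq_left hin.le]
    exact hl i (lt_of_lt_of_le hi (by simp))
  · refine infinite_of_injective_forall_mem (f := fun k => 4 * Nat.pair (encode t) k)
      (fun k k' h => ?_) (append_singleton_mem_codingTree ht)
    simpa using h

variable {z w : ℕ → ℕ}

theorem exists_eq_of_mem_treeBody_codingTree (hz : z ∈ treeBody codingTree) (n : ℕ) :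
    ∃ k, z n = 4 * Nat.pair (encode (initSeg z n)) k := by
  obtain ⟨k, hk⟩ := (mem_treeBody_iff.mp hz) (n + 1) n (by simp)
  rw [take_initSeg n.le_succ] at hk
  exact ⟨k, by simpa using hk⟩

theorem mod_four_eq_zero_of_mem_treeBody_codingTree (hz : z ∈ treeBody codingTree) (n : ℕ) :
    z n % 4 = 0 := by
  obtain ⟨k, hk⟩ := exists_eq_of_mem_treeBody_codingTree hz n
  omega

theorem initSeg_eq_of_mem_treeBody_codingTree (hz : z ∈ treeBody codingTree)
    (hw : w ∈ treeBody codingTree) {n : ℕ} (h : z n = w n) : initSeg z n = initSeg w n := by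
  obtain ⟨k, hk⟩ := exists_eq_of_mem_treeBody_codingTree hz n
  obtain ⟨k', hk'⟩ := exists_eq_of_mem_treeBody_codingTree hw n
  have : Nat.pair (encode (initSeg z n)) k = Nat.pair (encode (initSeg w n)) k' := by omega
  exact encode_injective (Nat.pair_eq_pair.mp this).1

theorem edFamily_treeBody_codingTree : EDFamily (treeBody codingTree) :=
  fun _ hz _ hw hne =>
    finite_setOf_eq_of_initSeg hne fun _ => initSeg_eq_of_mem_treeBody_codingTree hz hw

end CodingTree

section Killer

/-- Agrees with `z` infinitely often, yet is eventually different from every other branch of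
`codingTree`. -/
def killer (z : ℕ → ℕ) (n : ℕ) : ℕ := if n % 2 = 0 then z n else 4 * encode (initSeg z n) + 1

variable {z w : ℕ → ℕ}

theorem killer_mod_four_ne_two (hz : z ∈ treeBody codingTree) (n : ℕ) : killer z n % 4 ≠ 2 := by
  have := mod_four_eq_zero_of_mem_treeBody_codingTree hz n
  unfold killer
  split_ifs <;> omega

theorem initSeg_eq_of_killer_eq (hz : z ∈ treeBody codingTree) (hw : w ∈ treeBody codingTree)
    {n : ℕ} (h : killer z n = w n) : initSeg z n = initSeg w n := by
  have := mod_four_eq_zero_of_mem_treeBody_codingTree hw n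
  unfold killer at h
  split_ifs at h
  · exact initSeg_eq_of_mem_treeBody_codingTree hz hw h
  · omega

theorem initSeg_eq_of_killer_eq_killer (hz : z ∈ treeBody codingTree)
    (hw : w ∈ treeBody codingTree) {n : ℕ} (h : killer z n = killer w n) :
    initSeg z n = initSeg w n := by
  unfold killer at h
  split_ifs at h
  · exact initSeg_eq_of_mem_treeBody_codingTree hz hw h
  · exact encode_injective (by omega)

theorem killer_ne_self (hz : z ∈ treeBody codingTree) : killer z ≠ z := fun h => by
  have h1 : 4 * encode (initSeg z 1) + 1 = z 1 := congrFun h 1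
  have := mod_four_eq_zero_of_mem_treeBody_codingTree hz 1
  omega

theorem infinite_setOf_killer_eq_self (z : ℕ → ℕ) : {n | killer z n = z n}.Infinite :=
  infinite_of_injective_forall_mem (f := fun n => 2 * n) (fun a b h => by simpa using h)
    fun n => by simp [killer]

theorem EDFamily.notMem_of_killer_mem {A : Set (ℕ → ℕ)} (hA : EDFamily A)
    (hz : z ∈ treeBody codingTree) (hk : killer z ∈ A) : z ∉ A := fun hzA =>
  infinite_setOf_killer_eq_self z (hA _ hk _ hzA (killer_ne_self hz))

end Killer

section Raise

/-- Residue `2` modulo `4` keeps `raise d` away from everything built from `codingTree`. -/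
def raise (d : ℕ → ℕ) (n : ℕ) : ℕ := 4 * Nat.pair (d n) (encode (initSeg d n)) + 2

theorem lt_raise (d : ℕ → ℕ) (n : ℕ) : d n < raise d n := by
  have := Nat.left_le_pair (d n) (encode (initSeg d n))
  unfold raise
  omega

theorem raise_mod_four (d : ℕ → ℕ) (n : ℕ) : raise d n % 4 = 2 := by
  unfold raise
  omega

theorem initSeg_eq_of_raise_eq_raise {d d' : ℕ → ℕ} {n : ℕ} (h : raise d n = raise d' n) :
    initSeg d n = initSeg d' n := by
  have : Nat.pair (d n) (encode (initSeg d n)) = Nat.pair (d' n) (encode (initSeg d' n)) := by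
    unfold raise at h
    omega
  exact encode_injective (Nat.pair_eq_pair.mp this).2

theorem IsDominating.image_raise {D : Set (ℕ → ℕ)} (hD : IsDominating D) :
    IsDominating (raise '' D) := fun x => by
  obtain ⟨d, hd, hx⟩ := hD x
  exact ⟨raise d, mem_image_of_mem _ hd, hx.mono fun n hn => hn.trans (lt_raise d n)⟩

end Raise

section EventuallyDifferent

variable {A B : Set (ℕ → ℕ)}

theorem EDFamily.mono (hB : EDFamily B) (hAB : A ⊆ B) : EDFamily A :=
  fun f hf g hg => hB f (hAB hf) g (hAB hg)

theorem EDFamily.union (hA : EDFamily A) (hB : EDFamily B)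
    (hAB : ∀ f ∈ A, ∀ g ∈ B, {n | f n = g n}.Finite) : EDFamily (A ∪ B) := by
  rintro f (hf | hf) g (hg | hg) hfg
  · exact hA f hf g hg hfg
  · exact hAB f hf g hg
  · simpa only [eq_comm] using hAB g hg f hf
  · exact hB f hf g hg hfg

theorem EDFamily.exists_medFamily_superset (hA : EDFamily A) : ∃ M, A ⊆ M ∧ MEDFamily M := by
  obtain ⟨M, hAM, hM⟩ := zorn_subset_nonempty {B | EDFamily B} (fun c hc hchain _ => by
    refine ⟨⋃₀ c, fun f ⟨B₁, hB₁, hf⟩ g ⟨B₂, hB₂, hg⟩ => ?_, fun _ => subset_sUnion_of_mem⟩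
    rcases hchain.total hB₁ hB₂ with h | h
    · exact hc hB₂ f (h hf) g hg
    · exact hc hB₁ f hf g (h hg)) A hA
  exact ⟨M, hAM, hM.prop, fun B hMB hB => hMB.not_subset (hM.2 hB hMB.subset)⟩

theorem edFamily_seed {C Y : Set (ℕ → ℕ)} (hC : C ⊆ treeBody codingTree)
    (hY : Y ⊆ treeBody codingTree) (hCY : Disjoint C Y) (D : Set (ℕ → ℕ)) :
    EDFamily ((C ∪ killer '' Y) ∪ raise '' D) := by
  have hkiller : EDFamily (killer '' Y) := by
    rintro _ ⟨z, hz, rfl⟩ _ ⟨w, hw, rfl⟩ hne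
    exact finite_setOf_eq_of_initSeg (ne_of_apply_ne killer hne) fun _ =>
      initSeg_eq_of_killer_eq_killer (hY hz) (hY hw)
  have hraise : EDFamily (raise '' D) := by
    rintro _ ⟨d, -, rfl⟩ _ ⟨d', -, rfl⟩ hne
    exact finite_setOf_eq_of_initSeg (ne_of_apply_ne raise hne) fun _ =>
      initSeg_eq_of_raise_eq_raise
  refine ((edFamily_treeBody_codingTree.mono hC).union hkiller ?_).union hraise ?_
  · rintro f hf _ ⟨z, hz, rfl⟩
    exact finite_setOf_eq_of_initSeg (hCY.ne_of_mem hf hz) fun _ h =>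
      (initSeg_eq_of_killer_eq (hY hz) (hC hf) h.symm).symm
  · rintro f hf _ ⟨d, -, rfl⟩
    have hmod : ∀ n, f n % 4 ≠ 2 := by
      rcases hf with hf | ⟨z, hz, rfl⟩
      · exact fun n => by simp [mod_four_eq_zero_of_mem_treeBody_codingTree (hC hf) n]
      · exact killer_mod_four_ne_two (hY hz)
    exact finite_empty.subset fun n hn => hmod n (hn ▸ raise_mod_four d n)

end EventuallyDifferent

theorem exists_isDominating_mk_eq_domNumber : ∃ D, IsDominating D ∧ #D = domNumber :=
  csInf_mem (s := {c | ∃ D, IsDominating D ∧ #D = c})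
    ⟨_, univ, fun x => ⟨x + 1, mem_univ _, .of_forall fun n => Nat.lt_succ_self (x n)⟩, rfl⟩

theorem exists_separated_branches {𝒮 : Set (Set (List ℕ))} (h𝒮 : ∀ Q ∈ 𝒮, IsSacksTree Q) :
    ∃ c y : 𝒮 → ℕ → ℕ, (∀ Q, c Q ∈ treeBody Q.1 ∧ y Q ∈ treeBody Q.1) ∧ ∀ Q Q', c Q ≠ y Q' := by
  have hcard : #(𝒮 × Bool) ≤ 𝔠 :=
    (mk_le_of_injective (Subtype.val_injective.prodMap injective_id)).trans_eq (by simp)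
  obtain ⟨F, hF, hFmem⟩ := exists_injective_forall_mem_of_mk_le (fun i : 𝒮 × Bool => treeBody i.1.1)
    fun i => hcard.trans (h𝒮 _ i.1.2).continuum_le_mk_treeBody
  exact ⟨fun Q => F (Q, true), fun Q => F (Q, false), fun Q => ⟨hFmem (Q, true), hFmem (Q, false)⟩,
    fun Q Q' h => by simpa using hF h⟩

/-- there is an m.e.d. family that is s-, m- and l-nonmeasurable with a
dominating subfamily of size at most 𝔡. -/
theorem stmt19 :
    ∃ A : Set (ℕ → ℕ), MEDFamily A ∧
      ¬ TMeasurable {T | IsSacksTree T} A ∧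
      ¬ TMeasurable {T | IsMillerTree T} A ∧
      ¬ TMeasurable {T | IsLaverTree T} A ∧
      ∃ D ⊆ A, IsDominating D ∧ Cardinal.mk ↑D ≤ domNumber := by
  set 𝒮 := {Q | IsSacksTree Q ∧ Q ⊆ codingTree}
  obtain ⟨c, y, hcy, hne⟩ := exists_separated_branches (𝒮 := 𝒮) fun _ hQ => hQ.1
  have hbody : ∀ Q : 𝒮, treeBody Q.1 ⊆ treeBody codingTree := fun Q => treeBody_mono Q.2.2
  obtain ⟨D, hD, hDcard⟩ := exists_isDominating_mk_eq_domNumber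
  obtain ⟨A, hseed, hA⟩ := (edFamily_seed (C := range c) (Y := range y)
    (range_subset_iff.mpr fun Q => hbody Q (hcy Q).1)
    (range_subset_iff.mpr fun Q => hbody Q (hcy Q).2)
    (disjoint_range_iff.mpr hne) D).exists_medFamily_superset
  have hsplit : ∀ Q, IsSacksTree Q → Q ⊆ codingTree →
      (treeBody Q ∩ A).Nonempty ∧ ¬ treeBody Q ⊆ A := fun Q hQ hQP => by
    set Q' : 𝒮 := ⟨Q, hQ, hQP⟩
    refine ⟨⟨c Q', (hcy Q').1, hseed (.inl (.inl (mem_range_self _)))⟩, fun hsub => ?_⟩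
    exact hA.1.notMem_of_killer_mem (hbody Q' (hcy Q').2)
      (hseed (.inl (.inr (mem_image_of_mem _ (mem_range_self _))))) (hsub (hcy Q').2)
  have hP := isCompleteLaverTree_codingTree
  exact ⟨A, hA, not_tMeasurable_of_forall_subtree hP.isSacksTree hsplit,
    not_tMeasurable_of_forall_subtree hP.isMillerTree fun Q hQ => hsplit Q hQ.isSacksTree,
    not_tMeasurable_of_forall_subtree hP.isLaverTree fun Q hQ => hsplit Q hQ.isSacksTree,
    raise '' D, fun _ hf => hseed (.inr hf), hD.image_raise, mk_image_le.trans hDcard.le⟩
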